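/- Define F(t,Y) = (2/√π) ∫_0^t ∫_0^∞ (E_0^-(Y,Y',t-s) - E_0^+(Y,Y',t-s)) · (∫_{Y'/(2√s)}^∞ e^{-σ²} dσ) dY' ds for real Y ≥ 0, where E_0^∓ = e^{-(Y∓Y')²/(4(t-s))}/√(4π(t-s)). Then for every μ > 0 and T > 0 there is C with sup_{Y ≥ 0, 0<t≤T} e^{μ Y} |F(t,Y)| ≤ C t ≤ C T. -/

import Mathlib

open MeasureTheory

/-- Half-line heat kernel, direct part (time difference `τ`). -/
noncomputable def E0m (τ Y Y' : ℝ) : ℝ :=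
  Real.exp (-(Y - Y') ^ 2 / (4 * τ)) / Real.sqrt (4 * Real.pi * τ)

/-- Half-line heat kernel, reflected part (time difference `τ`). -/
noncomputable def E0p (τ Y Y' : ℝ) : ℝ :=
  Real.exp (-(Y + Y') ^ 2 / (4 * τ)) / Real.sqrt (4 * Real.pi * τ)

/-- The profile `F` such that `h' = ε ∂ₓₓ u₀₀ F`. -/
noncomputable def Fprof (t Y : ℝ) : ℝ :=
  (2 / Real.sqrt Real.pi) *
    ∫ s in (0:ℝ)..t,
      ∫ Y' in Set.Ioi (0:ℝ),
        (E0m (t - s) Y Y' - E0p (t - s) Y Y') *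
          ∫ σ in Set.Ioi (Y' / (2 * Real.sqrt s)), Real.exp (-σ ^ 2)

/-!
For `a ≥ 0` the Gaussian tail satisfies `∫_a^∞ e^{-σ²} dσ ≤ √(2π) e^{-a²/2}`; with
`a = Y'/(2√s)` the factor `e^{-Y'²/(8s)}` absorbs `e^{±μY'}` at the price `e^{2μ²s}`.
Completing the square, `e^{μY} E0^∓(τ, Y, Y') = e^{μ²τ ± μY'} E0^-(τ, Y - 2μτ, ±Y')`, and a heat
kernel has total mass `1`. Hence the weighted `Y'`-integral is bounded uniformly in `s ∈ (0, t]`,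
and the `s`-integral contributes the factor `t`.
-/

open Real Set ProbabilityTheory

lemma E0p_eq_E0m_neg (τ Y Y' : ℝ) : E0p τ Y Y' = E0m τ Y (-Y') := by
  simp [E0m, E0p]

lemma E0m_nonneg (τ Y Y' : ℝ) : 0 ≤ E0m τ Y Y' := by
  unfold E0m; positivity

lemma E0m_zero (Y Y' : ℝ) : E0m 0 Y Y' = 0 := by
  simp [E0m]

lemma E0m_eq_gaussianPDFReal {τ : ℝ} (hτ : 0 ≤ τ) (Y : ℝ) :
    E0m τ Y = gaussianPDFReal Y (2 * τ).toNNReal := by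
  ext Y'
  rw [gaussianPDFReal, Real.coe_toNNReal _ (by positivity), E0m, div_eq_inv_mul]
  congr 3 <;> ring

lemma integrable_E0m {τ : ℝ} (hτ : 0 ≤ τ) (Y : ℝ) : Integrable (E0m τ Y) := by
  rw [E0m_eq_gaussianPDFReal hτ]
  exact integrable_gaussianPDFReal _ _

lemma integral_E0m {τ : ℝ} (hτ : 0 < τ) (Y : ℝ) : ∫ Y', E0m τ Y Y' = 1 := by
  rw [E0m_eq_gaussianPDFReal hτ.le]
  exact integral_gaussianPDFReal_eq_one _ (by simpa using hτ)

lemma exp_mul_E0m {τ : ℝ} (hτ : 0 < τ) (μ Y Y' : ℝ) :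
    exp (μ * Y) * E0m τ Y Y' = exp (μ ^ 2 * τ + μ * Y') * E0m τ (Y - 2 * μ * τ) Y' := by
  simp only [E0m, mul_div_assoc', ← exp_add]
  congr 2
  field_simp
  ring

lemma integrable_exp_neg_sq : Integrable (fun σ : ℝ => exp (-σ ^ 2)) := by
  simpa using integrable_exp_neg_mul_sq one_pos

/-- `gaussTail a = (√π / 2) * erfc a`. -/
noncomputable def gaussTail (a : ℝ) : ℝ :=
  ∫ σ in Ioi a, exp (-σ ^ 2)

lemma gaussTail_nonneg (a : ℝ) : 0 ≤ gaussTail a :=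
  setIntegral_nonneg measurableSet_Ioi fun _ _ => (exp_pos _).le

lemma gaussTail_le {a : ℝ} (ha : 0 ≤ a) : gaussTail a ≤ √(2 * π) * exp (-(a ^ 2 / 2)) := by
  have hhalf : Integrable (fun σ : ℝ => exp (-(1 / 2) * σ ^ 2)) :=
    integrable_exp_neg_mul_sq (by norm_num)
  calc gaussTail a
      ≤ ∫ σ in Ioi a, exp (-(a ^ 2 / 2)) * exp (-(1 / 2) * σ ^ 2) := by
        refine setIntegral_mono_on integrable_exp_neg_sq.integrableOn
          (hhalf.const_mul _).integrableOn measurableSet_Ioi fun σ hσ => ?_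
        rw [← exp_add, exp_le_exp]
        nlinarith [mem_Ioi.mp hσ]
    _ ≤ ∫ σ, exp (-(a ^ 2 / 2)) * exp (-(1 / 2) * σ ^ 2) :=
        setIntegral_le_integral (hhalf.const_mul _) (.of_forall fun _ => by positivity)
    _ = √(2 * π) * exp (-(a ^ 2 / 2)) := by
        rw [integral_const_mul, integral_gaussian, mul_comm, div_div_eq_mul_div, div_one,
          mul_comm π]

lemma mul_sub_sq_div_le (μ y : ℝ) {s : ℝ} (hs : 0 < s) :
    μ * y - y ^ 2 / (8 * s) ≤ 2 * μ ^ 2 * s := by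
  rw [sub_le_iff_le_add, ← sub_le_iff_le_add', le_div_iff₀ (by positivity)]
  nlinarith [sq_nonneg (y - 4 * μ * s)]

lemma exp_mul_E0m_mul_gaussTail_le {τ s : ℝ} (hτ : 0 < τ) (hs : 0 < s) (μ Y z : ℝ) :
    exp (μ * Y) * (E0m τ Y z * gaussTail (|z| / (2 * √s))) ≤
      √(2 * π) * exp (μ ^ 2 * τ + 2 * μ ^ 2 * s) * E0m τ (Y - 2 * μ * τ) z := by
  have htail : gaussTail (|z| / (2 * √s)) ≤ √(2 * π) * exp (-(z ^ 2 / (8 * s))) := by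
    have hsq : (|z| / (2 * √s)) ^ 2 / 2 = z ^ 2 / (8 * s) := by
      rw [div_pow, mul_pow, sq_abs, sq_sqrt hs.le]
      ring
    simpa only [hsq] using gaussTail_le (a := |z| / (2 * √s)) (by positivity)
  have hE := E0m_nonneg τ (Y - 2 * μ * τ) z
  calc exp (μ * Y) * (E0m τ Y z * gaussTail (|z| / (2 * √s)))
      = exp (μ ^ 2 * τ + μ * z) * E0m τ (Y - 2 * μ * τ) z * gaussTail (|z| / (2 * √s)) := by
        rw [← mul_assoc, exp_mul_E0m hτ]
    _ ≤ exp (μ ^ 2 * τ + μ * z) * E0m τ (Y - 2 * μ * τ) z *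
          (√(2 * π) * exp (-(z ^ 2 / (8 * s)))) := by
        gcongr
    _ = √(2 * π) * exp (μ ^ 2 * τ + (μ * z - z ^ 2 / (8 * s))) * E0m τ (Y - 2 * μ * τ) z := by
        rw [exp_add, exp_add, exp_sub, exp_neg, div_eq_mul_inv]
        ring
    _ ≤ √(2 * π) * exp (μ ^ 2 * τ + 2 * μ ^ 2 * s) * E0m τ (Y - 2 * μ * τ) z := by
        gcongr
        exact mul_sub_sq_div_le μ z hs

lemma norm_exp_mul_E0m_sub_E0p_mul_gaussTail_le {τ s : ℝ} (hτ : 0 < τ) (hs : 0 < s)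
    (μ Y : ℝ) {Y' : ℝ} (hY' : 0 ≤ Y') :
    ‖exp (μ * Y) * ((E0m τ Y Y' - E0p τ Y Y') * gaussTail (Y' / (2 * √s)))‖ ≤
      √(2 * π) * exp (μ ^ 2 * τ + 2 * μ ^ 2 * s) *
        (E0m τ (Y - 2 * μ * τ) Y' + E0m τ (Y - 2 * μ * τ) (-Y')) := by
  have hdirect := exp_mul_E0m_mul_gaussTail_le hτ hs μ Y Y'
  have hreflected := exp_mul_E0m_mul_gaussTail_le hτ hs μ Y (-Y')
  rw [abs_of_nonneg hY'] at hdirect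
  rw [abs_neg, abs_of_nonneg hY'] at hreflected
  have hdiff : |E0m τ Y Y' - E0m τ Y (-Y')| ≤ E0m τ Y Y' + E0m τ Y (-Y') :=
    abs_sub_le_of_nonneg_of_le (E0m_nonneg _ _ _) (le_add_of_nonneg_right (E0m_nonneg _ _ _))
      (E0m_nonneg _ _ _) (le_add_of_nonneg_left (E0m_nonneg _ _ _))
  rw [E0p_eq_E0m_neg, norm_mul, norm_mul, norm_of_nonneg (exp_pos _).le,
    norm_of_nonneg (gaussTail_nonneg _), norm_eq_abs]
  calc exp (μ * Y) * (|E0m τ Y Y' - E0m τ Y (-Y')| * gaussTail (Y' / (2 * √s)))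
      ≤ exp (μ * Y) * ((E0m τ Y Y' + E0m τ Y (-Y')) * gaussTail (Y' / (2 * √s))) := by
        have := gaussTail_nonneg (Y' / (2 * √s))
        gcongr
    _ ≤ _ := by linarith

noncomputable def fprofInner (t Y s : ℝ) : ℝ :=
  ∫ Y' in Ioi 0, (E0m (t - s) Y Y' - E0p (t - s) Y Y') * gaussTail (Y' / (2 * √s))

lemma exp_mul_abs_fprofInner_le (μ Y : ℝ) {t s : ℝ} (hs : 0 < s) (hst : s ≤ t) :
    exp (μ * Y) * |fprofInner t Y s| ≤ 2 * √(2 * π) * exp (2 * μ ^ 2 * t) := by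
  rcases hst.eq_or_lt with rfl | hst
  · simp [fprofInner, E0p_eq_E0m_neg, E0m_zero]
    positivity
  have hτ : 0 < t - s := sub_pos.mpr hst
  set c := Y - 2 * μ * (t - s)
  set K := √(2 * π) * exp (μ ^ 2 * (t - s) + 2 * μ ^ 2 * s) with hK
  have hmajorant : Integrable (fun Y' => K * (E0m (t - s) c Y' + E0m (t - s) c (-Y'))) :=
    ((integrable_E0m hτ.le c).add (integrable_E0m hτ.le c).comp_neg).const_mul K
  calc exp (μ * Y) * |fprofInner t Y s|
      = ‖∫ Y' in Ioi 0, exp (μ * Y) *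
          ((E0m (t - s) Y Y' - E0p (t - s) Y Y') * gaussTail (Y' / (2 * √s)))‖ := by
        rw [integral_const_mul, norm_mul, norm_of_nonneg (exp_pos _).le, norm_eq_abs, fprofInner]
    _ ≤ ∫ Y' in Ioi 0, K * (E0m (t - s) c Y' + E0m (t - s) c (-Y')) := by
        refine norm_integral_le_of_norm_le hmajorant.integrableOn ?_
        filter_upwards [ae_restrict_mem measurableSet_Ioi] with Y' hY'
        exact norm_exp_mul_E0m_sub_E0p_mul_gaussTail_le hτ hs μ Y (le_of_lt hY')
    _ ≤ ∫ Y', K * (E0m (t - s) c Y' + E0m (t - s) c (-Y')) :=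
        setIntegral_le_integral hmajorant
          (.of_forall fun Y' => mul_nonneg (by positivity)
            (add_nonneg (E0m_nonneg _ _ _) (E0m_nonneg _ _ _)))
    _ = 2 * K := by
        rw [integral_const_mul, integral_add (integrable_E0m hτ.le c)
          (integrable_E0m hτ.le c).comp_neg, integral_neg_eq_self (E0m (t - s) c),
          integral_E0m hτ]
        ring
    _ ≤ 2 * √(2 * π) * exp (2 * μ ^ 2 * t) := by
        rw [hK, ← mul_assoc]
        gcongr
        nlinarith [sq_nonneg μ]

lemma exp_mul_abs_Fprof_le (μ Y : ℝ) {t : ℝ} (ht : 0 ≤ t) :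
    exp (μ * Y) * |Fprof t Y| ≤ 2 / √π * (2 * √(2 * π) * exp (2 * μ ^ 2 * t)) * t := by
  have hinner : ∀ s ∈ uIoc 0 t, ‖exp (μ * Y) * fprofInner t Y s‖ ≤
      2 * √(2 * π) * exp (2 * μ ^ 2 * t) := by
    intro s hs
    rw [uIoc_of_le ht] at hs
    rw [norm_mul, norm_of_nonneg (exp_pos _).le, norm_eq_abs]
    exact exp_mul_abs_fprofInner_le μ Y hs.1 hs.2
  calc exp (μ * Y) * |Fprof t Y|
      = 2 / √π * ‖∫ s in (0 : ℝ)..t, exp (μ * Y) * fprofInner t Y s‖ := by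
        rw [show Fprof t Y = 2 / √π * ∫ s in (0 : ℝ)..t, fprofInner t Y s from rfl,
          intervalIntegral.integral_const_mul, norm_mul, norm_of_nonneg (exp_pos _).le,
          norm_eq_abs, abs_mul, abs_of_nonneg (by positivity)]
        ring
    _ ≤ 2 / √π * (2 * √(2 * π) * exp (2 * μ ^ 2 * t) * |t - 0|) := by
        gcongr
        exact intervalIntegral.norm_integral_le_of_norm_le_const hinner
    _ = 2 / √π * (2 * √(2 * π) * exp (2 * μ ^ 2 * t)) * t := by
        rw [sub_zero, abs_of_nonneg ht]
        ring

theorem stmt_13_general (μ T : ℝ) :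
    ∃ C : ℝ, 0 < C ∧ ∀ Y t : ℝ, 0 ≤ Y → 0 < t → t ≤ T →
      Real.exp (μ * Y) * |Fprof t Y| ≤ C * t ∧ C * t ≤ C * T := by
  refine ⟨2 / √π * (2 * √(2 * π) * exp (2 * μ ^ 2 * T)), by positivity,
    fun Y t _ ht htT => ⟨?_, by gcongr⟩⟩
  calc exp (μ * Y) * |Fprof t Y|
      ≤ 2 / √π * (2 * √(2 * π) * exp (2 * μ ^ 2 * t)) * t := exp_mul_abs_Fprof_le μ Y ht.le
    _ ≤ 2 / √π * (2 * √(2 * π) * exp (2 * μ ^ 2 * T)) * t := by gcongr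

theorem stmt_13 (μ T : ℝ) (hμ : 0 < μ) (hT : 0 < T) :
    ∃ C : ℝ, 0 < C ∧ ∀ Y t : ℝ, 0 ≤ Y → 0 < t → t ≤ T →
      Real.exp (μ * Y) * |Fprof t Y| ≤ C * t ∧ C * t ≤ C * T :=
  stmt_13_general μ T
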